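/- arXiv:2211.16338 — 4 statements merged into one kernel-verified Lean document; each statement's English description precedes it below -/
import Mathlib

section
/- Let X be a set and let T : X³ → X³, T(x,y,z) = (u(x,y,z), v(x,y,z), w(x,y,z)), be a tetrahedron map. Then the map S : X⁴ → X⁴ defined by S(x,y,z,t) = (u(x,y,z), v(x,y,z), w(x,y,z), t) is a 4-simplex map. -/
noncomputable section

namespace Paper4Simplex

variable {X : Type*}

/-- Quadruples over `X`. -/
abbrev Q (X : Type*) : Type _ := X × X × X × X

/-- 10-tuples over `X`. -/
abbrev P (X : Type*) : Type _ := X × X × X × X × X × X × X × X × X × X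

/-- `S` acting on coordinates 1,2,3,4 of a 10-tuple. -/
def app1234 (S : Q X → Q X) : P X → P X := fun p =>
  match p with
  | (a,b,c,d,e,f,g,h,i,j) =>
    match S (a,b,c,d) with
    | (A,B,C,D) => (A,B,C,D,e,f,g,h,i,j)

/-- `S` acting on coordinates 1,5,6,7 of a 10-tuple. -/
def app1567 (S : Q X → Q X) : P X → P X := fun p =>
  match p with
  | (a,b,c,d,e,f,g,h,i,j) =>
    match S (a,e,f,g) with
    | (A,E,F,G) => (A,b,c,d,E,F,G,h,i,j)

/-- `S` acting on coordinates 2,5,8,9 of a 10-tuple. -/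
def app2589 (S : Q X → Q X) : P X → P X := fun p =>
  match p with
  | (a,b,c,d,e,f,g,h,i,j) =>
    match S (b,e,h,i) with
    | (B,E,H,I) => (a,B,c,d,E,f,g,H,I,j)

/-- `S` acting on coordinates 3,6,8,10 of a 10-tuple. -/
def app368X (S : Q X → Q X) : P X → P X := fun p =>
  match p with
  | (a,b,c,d,e,f,g,h,i,j) =>
    match S (c,f,h,j) with
    | (C,F,H,J) => (a,b,C,d,e,F,g,H,i,J)

/-- `S` acting on coordinates 4,7,9,10 of a 10-tuple. -/
def app479X (S : Q X → Q X) : P X → P X := fun p =>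
  match p with
  | (a,b,c,d,e,f,g,h,i,j) =>
    match S (d,g,i,j) with
    | (D,G,I,J) => (a,b,c,D,e,f,G,h,I,J)

def proj1234 : P X → Q X := fun p => match p with
  | (a,b,c,d,_,_,_,_,_,_) => (a,b,c,d)

def proj1567 : P X → Q X := fun p => match p with
  | (a,_,_,_,e,f,g,_,_,_) => (a,e,f,g)

def proj2589 : P X → Q X := fun p => match p with
  | (_,b,_,_,e,_,_,h,i,_) => (b,e,h,i)

def proj368X : P X → Q X := fun p => match p with
  | (_,_,c,_,_,f,_,h,_,j) => (c,f,h,j)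

def proj479X : P X → Q X := fun p => match p with
  | (_,_,_,d,_,_,g,_,i,j) => (d,g,i,j)

/-- Left-hand side of the 4-simplex equation. -/
def lhs (S : Q X → Q X) : P X → P X :=
  app1234 S ∘ app1567 S ∘ app2589 S ∘ app368X S ∘ app479X S

/-- Right-hand side of the 4-simplex equation. -/
def rhs (S : Q X → Q X) : P X → P X :=
  app479X S ∘ app368X S ∘ app2589 S ∘ app1567 S ∘ app1234 S

/-- All denominators occurring on the left-hand side composition are nonzero:
`D` holds at each quadruple to which `S` is applied. -/
def lhsDom (D : Q X → Prop) (S : Q X → Q X) (p : P X) : Prop :=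
  D (proj479X p) ∧
  D (proj368X (app479X S p)) ∧
  D (proj2589 (app368X S (app479X S p))) ∧
  D (proj1567 (app2589 S (app368X S (app479X S p)))) ∧
  D (proj1234 (app1567 S (app2589 S (app368X S (app479X S p)))))

/-- All denominators occurring on the right-hand side composition are nonzero. -/
def rhsDom (D : Q X → Prop) (S : Q X → Q X) (p : P X) : Prop :=
  D (proj1234 p) ∧
  D (proj1567 (app1234 S p)) ∧
  D (proj2589 (app1567 S (app1234 S p))) ∧
  D (proj368X (app2589 S (app1567 S (app1234 S p)))) ∧
  D (proj479X (app368X S (app2589 S (app1567 S (app1234 S p)))))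


/-! Statement 0: a tetrahedron map extends trivially to a 4-simplex map. -/

/-- Triples over `X`. -/
abbrev H (X : Type*) : Type _ := X × X × X

/-- 6-tuples over `X`. -/
abbrev P6 (X : Type*) : Type _ := X × X × X × X × X × X

/-- `T` acting on coordinates 1,2,3 of a 6-tuple. -/
def t123 (T : H X → H X) : P6 X → P6 X := fun p =>
  match p with
  | (a,b,c,d,e,f) => match T (a,b,c) with | (A,B,C) => (A,B,C,d,e,f)

/-- `T` acting on coordinates 1,4,5 of a 6-tuple. -/
def t145 (T : H X → H X) : P6 X → P6 X := fun p =>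
  match p with
  | (a,b,c,d,e,f) => match T (a,d,e) with | (A,D,E) => (A,b,c,D,E,f)

/-- `T` acting on coordinates 2,4,6 of a 6-tuple. -/
def t246 (T : H X → H X) : P6 X → P6 X := fun p =>
  match p with
  | (a,b,c,d,e,f) => match T (b,d,f) with | (B,D,F) => (a,B,c,D,e,F)

/-- `T` acting on coordinates 3,5,6 of a 6-tuple. -/
def t356 (T : H X → H X) : P6 X → P6 X := fun p =>
  match p with
  | (a,b,c,d,e,f) => match T (c,e,f) with | (C,E,F) => (a,b,C,d,E,F)

/-- The functional tetrahedron (Zamolodchikov) equation. -/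
def IsTetrahedronMap (T : H X → H X) : Prop :=
  t123 T ∘ t145 T ∘ t246 T ∘ t356 T = t356 T ∘ t246 T ∘ t145 T ∘ t123 T

/-- The set-theoretical 4-simplex (Bazhanov–Stroganov) equation. -/
def Is4SimplexMap (S : Q X → Q X) : Prop := lhs S = rhs S

/-! The fourth argument of `S` is carried along untouched, so `S^{4,7,9,10}` acts as `T` on the
coordinates `4,7,9`, while the other four factors move only the coordinates `1,2,3,5,6,8`, on
which (relabelled `1,…,6`) they act as `T^{123}`, `T^{145}`, `T^{246}`, `T^{356}`. Hence
`S^{4,7,9,10}` commutes with the other factors, and the 4-simplex equation reduces to the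
tetrahedron equation on those six coordinates. -/

def trivialExtension (T : H X → H X) : Q X → Q X := fun q =>
  match q with
  | (x, y, z, t) =>
    match T (x, y, z) with
    | (u, v, w) => (u, v, w, t)

def splitCoords : P X ≃ P6 X × Q X where
  toFun p := match p with
    | (a,b,c,d,e,f,g,h,i,j) => ((a,b,c,e,f,h), (d,g,i,j))
  invFun q := match q with
    | ((a,b,c,e,f,h), (d,g,i,j)) => (a,b,c,d,e,f,g,h,i,j)
  left_inv := by rintro ⟨a,b,c,d,e,f,g,h,i,j⟩; rfl
  right_inv := by rintro ⟨⟨a,b,c,e,f,h⟩, ⟨d,g,i,j⟩⟩; rfl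

theorem splitCoords_conj_map_comp (f f' : P6 X → P6 X) (g g' : Q X → Q X) :
    splitCoords.symm.conj (Prod.map f g) ∘ splitCoords.symm.conj (Prod.map f' g') =
      splitCoords.symm.conj (Prod.map (f ∘ f') (g ∘ g')) := by
  rw [← Equiv.conj_comp, Prod.map_comp_map]

theorem app479X_eq_conj (S : Q X → Q X) :
    app479X S = splitCoords.symm.conj (Prod.map id S) := by
  funext ⟨a,b,c,d,e,f,g,h,i,j⟩
  rfl

section

variable (T : H X → H X)

theorem app1234_trivialExtension :
    app1234 (trivialExtension T) = splitCoords.symm.conj (Prod.map (t123 T) id) := by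
  funext ⟨a,b,c,d,e,f,g,h,i,j⟩
  rfl

theorem app1567_trivialExtension :
    app1567 (trivialExtension T) = splitCoords.symm.conj (Prod.map (t145 T) id) := by
  funext ⟨a,b,c,d,e,f,g,h,i,j⟩
  rfl

theorem app2589_trivialExtension :
    app2589 (trivialExtension T) = splitCoords.symm.conj (Prod.map (t246 T) id) := by
  funext ⟨a,b,c,d,e,f,g,h,i,j⟩
  rfl

theorem app368X_trivialExtension :
    app368X (trivialExtension T) = splitCoords.symm.conj (Prod.map (t356 T) id) := by
  funext ⟨a,b,c,d,e,f,g,h,i,j⟩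
  rfl

end

/-- If `T : X³ → X³`, `T(x,y,z) = (u,v,w)`, is a tetrahedron map, then
`S : X⁴ → X⁴`, `S(x,y,z,t) = (u(x,y,z), v(x,y,z), w(x,y,z), t)`, is a 4-simplex map. -/
theorem trivial_extension_is_4simplex {X : Type*} (T : H X → H X)
    (hT : IsTetrahedronMap T) :
    Is4SimplexMap (fun q : Q X =>
      match q with
      | (x, y, z, t) =>
        match T (x, y, z) with
        | (u, v, w) => (u, v, w, t)) := by
  change lhs (trivialExtension T) = rhs (trivialExtension T)
  simp only [lhs, rhs, app1234_trivialExtension, app1567_trivialExtension,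
    app2589_trivialExtension, app368X_trivialExtension, app479X_eq_conj,
    splitCoords_conj_map_comp, Function.comp_id, Function.id_comp]
  rw [hT]

end Paper4Simplex
end
end

section
/- Let κ ∈ ℂ, κ ≠ 0. The map S₁ : (ℂ²)⁴ → (ℂ²)⁴ given by S₁(x₁,x₂,y₁,y₂,z₁,z₂,t₁,t₂) = (x₁, x₂, (y₁ − x₁z₁)/κ, y₂, z₁, t₂, t₁y₂/x₂, z₂) is a 4-simplex map, i.e. it satisfies the 4-simplex equation at every point of (ℂ²)^{10} at which all denominators occurring in both composed sides are nonzero. -/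
/-!
`S₁` only permutes the second components of the pairs (it swaps `z₂` and `t₂`), so every
denominator on either side is the second component of one of the first four input pairs, and
both sides are explicit rational functions of the input `((a₁, a₂), …, (j₁, j₂))`. They agree
syntactically in eight of the ten pairs, in the fifth by a polynomial identity in `κ⁻¹`, and in
the seventh after cancelling `b₂ / b₂`.
-/

noncomputable section

namespace Paper4Simplex

variable {X : Type*}

/-! Case a of the Kashaev–Korepanov–Sergeev type 4-simplex maps. -/

abbrev C2 : Type := ℂ × ℂ

/-- The map S₁ of case a. -/
def Sa1 (κ : ℂ) : Q C2 → Q C2 := fun q =>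
  match q with
  | ((x1,x2),(y1,y2),(z1,z2),(t1,t2)) =>
    ((x1, x2), ((y1 - x1*z1)/κ, y2), (z1, t2), (t1*y2/x2, z2))

/-- The map S₂ of case a. -/
def Sa2 (κ : ℂ) : Q C2 → Q C2 := fun q =>
  match q with
  | ((x1,x2),(y1,y2),(z1,z2),(t1,t2)) =>
    ((x1, x2), ((y1 - x1*z1)/κ, y2), (z1, y2), (t1*y2/x2, t2*z2/y2))

/-- Nonvanishing of the denominators of `Sa1` (besides the parameter κ). -/
def DomA1 : Q C2 → Prop := fun q =>
  match q with
  | ((_,x2),_,_,_) => x2 ≠ 0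

/-- Nonvanishing of the denominators of `Sa2` (besides the parameter κ). -/
def DomA2 : Q C2 → Prop := fun q =>
  match q with
  | ((_,x2),(_,y2),_,_) => x2 ≠ 0 ∧ y2 ≠ 0

section ExplicitSides

variable (κ a1 a2 b1 b2 c1 c2 d1 d2 e1 e2 f1 f2 g1 g2 h1 h2 i1 i2 j1 j2 : ℂ)

theorem lhs_Sa1_apply :
    lhs (Sa1 κ) ((a1, a2), (b1, b2), (c1, c2), (d1, d2), (e1, e2), (f1, f2), (g1, g2),
      (h1, h2), (i1, i2), (j1, j2)) =
    ((a1, a2), ((b1 - a1 * c1) / κ, b2), (c1, d2), (d1 * b2 / a2, c2),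
      (((e1 - b1 * h1) / κ - a1 * ((f1 - c1 * h1) / κ)) / κ, e2), ((f1 - c1 * h1) / κ, g2),
      ((g1 - d1 * i1) / κ * e2 / a2, f2), (h1, j2), (i1 * e2 / b2, i2),
      (j1 * g2 / d2 * f2 / c2, h2)) :=
  rfl

theorem rhs_Sa1_apply :
    rhs (Sa1 κ) ((a1, a2), (b1, b2), (c1, c2), (d1, d2), (e1, e2), (f1, f2), (g1, g2),
      (h1, h2), (i1, i2), (j1, j2)) =
    ((a1, a2), ((b1 - a1 * c1) / κ, b2), (c1, d2), (d1 * b2 / a2, c2),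
      (((e1 - a1 * f1) / κ - (b1 - a1 * c1) / κ * h1) / κ, e2), ((f1 - c1 * h1) / κ, g2),
      ((g1 * e2 / a2 - d1 * b2 / a2 * (i1 * e2 / b2)) / κ, f2), (h1, j2), (i1 * e2 / b2, i2),
      (j1 * g2 / d2 * f2 / c2, h2)) :=
  rfl

theorem lhsDom_DomA1_Sa1_iff :
    lhsDom DomA1 (Sa1 κ) ((a1, a2), (b1, b2), (c1, c2), (d1, d2), (e1, e2), (f1, f2),
      (g1, g2), (h1, h2), (i1, i2), (j1, j2)) ↔
    d2 ≠ 0 ∧ c2 ≠ 0 ∧ b2 ≠ 0 ∧ a2 ≠ 0 ∧ a2 ≠ 0 :=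
  Iff.rfl

end ExplicitSides

theorem Sa1_is_4simplex_general (κ : ℂ) (p : P C2)
    (hL : lhsDom DomA1 (Sa1 κ) p) :
    lhs (Sa1 κ) p = rhs (Sa1 κ) p := by
  obtain ⟨⟨a1, a2⟩, ⟨b1, b2⟩, ⟨c1, c2⟩, ⟨d1, d2⟩, ⟨e1, e2⟩, ⟨f1, f2⟩, ⟨g1, g2⟩, ⟨h1, h2⟩,
    ⟨i1, i2⟩, ⟨j1, j2⟩⟩ := p
  obtain ⟨-, -, hb, -, -⟩ := (lhsDom_DomA1_Sa1_iff ..).mp hL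
  have hfifth : ((e1 - b1 * h1) / κ - a1 * ((f1 - c1 * h1) / κ)) / κ =
      ((e1 - a1 * f1) / κ - (b1 - a1 * c1) / κ * h1) / κ := by
    ring
  have hseventh : (g1 - d1 * i1) / κ * e2 / a2 =
      (g1 * e2 / a2 - d1 * b2 / a2 * (i1 * e2 / b2)) / κ := by
    field_simp
  rw [lhs_Sa1_apply, rhs_Sa1_apply, hfifth, hseventh]

/-- The map S₁ : (ℂ²)⁴ → (ℂ²)⁴,
S₁(x₁,x₂,y₁,y₂,z₁,z₂,t₁,t₂) = (x₁, x₂, (y₁−x₁z₁)/κ, y₂, z₁, t₂, t₁y₂/x₂, z₂),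
is a 4-simplex map: it satisfies the 4-simplex equation at every point of (ℂ²)¹⁰
at which all denominators occurring in both composed sides are nonzero. -/
theorem Sa1_is_4simplex (κ : ℂ) (hκ : κ ≠ 0) (p : P C2)
    (hL : lhsDom DomA1 (Sa1 κ) p) (hR : rhsDom DomA1 (Sa1 κ) p) :
    lhs (Sa1 κ) p = rhs (Sa1 κ) p :=
  Sa1_is_4simplex_general κ p hL

end Paper4Simplex
end
end

section
/- Let κ ∈ ℂ, κ ≠ 0. The map S₂ : (ℂ²)⁴ → (ℂ²)⁴ given by S₂(x₁,x₂,y₁,y₂,z₁,z₂,t₁,t₂) = (x₁, x₂, (y₁ − x₁z₁)/κ, y₂, z₁, y₂, t₁y₂/x₂, t₂z₂/y₂) is a 4-simplex map, i.e. it satisfies the 4-simplex equation at every point of (ℂ²)^{10} at which all denominators occurring in both composed sides are nonzero. -/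
noncomputable section

namespace Paper4Simplex

variable {X : Type*}

/-! Both sides are computed in closed form. On the left-hand side each entry of the composite is
the corresponding entry of `sa2SimplexValue` up to rearranging quotients; on the right-hand side
the quotients by `b₂` and `e₂`, the `y₂`-entries fed into the first two applications of `S₂`,
have to cancel. -/

def sa2SimplexValue (κ : ℂ) : P C2 → P C2 := fun p =>
  match p with
  | ((a1,a2),(b1,b2),(c1,c2),(d1,d2),(e1,e2),(f1,f2),(g1,g2),(h1,h2),(i1,i2),(j1,j2)) =>
    ((a1, a2),
     ((b1 - a1*c1)/κ, b2),
     (c1, b2),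
     (d1*b2/a2, d2*c2/b2),
     ((e1 - a1*f1 - b1*h1 + a1*c1*h1)/κ^2, e2),
     ((f1 - c1*h1)/κ, e2),
     ((g1 - d1*i1)*e2/(κ*a2), g2*f2/e2),
     (h1, e2),
     (i1*e2/b2, g2*f2/e2),
     (j1*f2*g2/(c2*d2), j2*h2*i2/(f2*g2)))

theorem lhs_Sa2_eq_sa2SimplexValue (κ : ℂ) (p : P C2) :
    lhs (Sa2 κ) p = sa2SimplexValue κ p := by
  obtain ⟨⟨a1,a2⟩,⟨b1,b2⟩,⟨c1,c2⟩,⟨d1,d2⟩,⟨e1,e2⟩,⟨f1,f2⟩,⟨g1,g2⟩,⟨h1,h2⟩,⟨i1,i2⟩,⟨j1,j2⟩⟩ := p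
  simp only [lhs, app1234, app1567, app2589, app368X, app479X, Sa2, sa2SimplexValue,
    Function.comp, Prod.mk.injEq, and_true, true_and]
  and_intros <;> ring

theorem rhs_Sa2_eq_sa2SimplexValue (κ : ℂ)
    {a1 a2 b1 b2 c1 c2 d1 d2 e1 e2 f1 f2 g1 g2 h1 h2 i1 i2 j1 j2 : ℂ} (hb : b2 ≠ 0) (he : e2 ≠ 0) :
    rhs (Sa2 κ) ((a1,a2),(b1,b2),(c1,c2),(d1,d2),(e1,e2),(f1,f2),(g1,g2),(h1,h2),(i1,i2),(j1,j2)) =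
      sa2SimplexValue κ
        ((a1,a2),(b1,b2),(c1,c2),(d1,d2),(e1,e2),(f1,f2),(g1,g2),(h1,h2),(i1,i2),(j1,j2)) := by
  simp only [rhs, app1234, app1567, app2589, app368X, app479X, Sa2, sa2SimplexValue,
    Function.comp, Prod.mk.injEq, and_true, true_and]
  and_intros <;> field_simp
  ring

theorem Sa2_is_4simplex_general (κ : ℂ) (p : P C2)
    (hR : rhsDom DomA2 (Sa2 κ) p) :
    lhs (Sa2 κ) p = rhs (Sa2 κ) p := by
  obtain ⟨⟨a1,a2⟩,⟨b1,b2⟩,⟨c1,c2⟩,⟨d1,d2⟩,⟨e1,e2⟩,⟨f1,f2⟩,⟨g1,g2⟩,⟨h1,h2⟩,⟨i1,i2⟩,⟨j1,j2⟩⟩ := p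
  obtain ⟨⟨-, hb⟩, ⟨-, he⟩, -⟩ : (a2 ≠ 0 ∧ b2 ≠ 0) ∧ (a2 ≠ 0 ∧ e2 ≠ 0) ∧ _ := hR
  rw [lhs_Sa2_eq_sa2SimplexValue, rhs_Sa2_eq_sa2SimplexValue κ hb he]

/-- The map S₂ : (ℂ²)⁴ → (ℂ²)⁴,
S₂(x₁,x₂,y₁,y₂,z₁,z₂,t₁,t₂) = (x₁, x₂, (y₁−x₁z₁)/κ, y₂, z₁, y₂, t₁y₂/x₂, t₂z₂/y₂),
is a 4-simplex map: it satisfies the 4-simplex equation at every point of (ℂ²)¹⁰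
at which all denominators occurring in both composed sides are nonzero. -/
theorem Sa2_is_4simplex (κ : ℂ) (hκ : κ ≠ 0) (p : P C2)
    (hL : lhsDom DomA2 (Sa2 κ) p) (hR : rhsDom DomA2 (Sa2 κ) p) :
    lhs (Sa2 κ) p = rhs (Sa2 κ) p :=
  Sa2_is_4simplex_general κ p hR

end Paper4Simplex
end
end

section
/- Let S : (ℂ³)⁴ → (ℂ³)⁴ be the Kadomtsev–Petviashvili type 4-simplex map with components (u₁,u₂,u₃,v₁,v₂,v₃,w₁,w₂,w₃,r₁,r₂,r₃) as in the paper (u₁ = x₁y₁/(z₁ + x₁(y₁ − z₁ + z₂ − y₁z₂)), u₂ = (y₂(1 − z₁) + x₂y₁(z₂ − 1) + x₂y₂(z₁ − z₂))/((1 − x₂)(z₂ − z₁) + (1 − z₂)(y₂ − x₂y₁)), u₃ = (t₁ − t₂)x₃y₃/((t₁ − 1)x₃ − (t₂ − 1)y₃), v₁ = z₁ + x₁(y₁ − z₁ + z₂ − y₁z₂), v₂ = v₁·[(1 − x₂)y₂z₁ − (y₁ − y₂)x₂z₂]/(x₁(y₁ − y₂)(z₁ − z₂) − z₁(x₂y₁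 − y₂)), v₃ = (t₁ − t₂)x₃y₃/(t₁x₃ − t₂y₃), w₁ = (x₁ − x₂)y₁z₁[y₁x₂(z₂ − 1) + (z₁ − z₂)(x₂ − 1) − y₂(z₂ − 1)]/Λ, w₂ = [x₁z₂(y₁ − y₂) + y₂z₁(x₁ − 1)][y₁x₂(z₂ − 1) + (z₁ − z₂)(x₂ − 1) − y₂(z₂ − 1)]/Λ, w₃ = t₃, r₁ = t₁[(t₁ − 1)x₃ − (t₂ − 1)y₃]/((t₁ − t₂)y₃), r₂ = t₂[(t₁ − 1)x₃ − (t₂ − 1)y₃]/((t₁ − t₂)x₃), r₃ = z₃). Then at every point where all denominators are nonzero the following identities hold: u₁v₁ = x₁y₁, (v₂ − 1)(w₂ − 1) = (y₂ − 1)(z₂ − 1), u₃r₁ = x₃t₁, v₃(1 − r₂) = y₃(1 − t₂), w₃r₃ = z₃t₃ and w₃ + r₃ = z₃ + t₃; that is, I₁ = x₁y₁, I₂ = (y₂ − 1)(z₂ − 1), I₃ = x₃t₁, I₄ = y₃(1 − t₂), I₅ = z₃t₃ and I₆ = z₃ + t₃ are invariants of S. -/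
noncomputable section

namespace Paper4Simplex

variable {X : Type*}

/-! The Kadomtsev–Petviashvili type 4-simplex map. -/

abbrev C3 : Type := ℂ × ℂ × ℂ

/-- The quantity Λ of the paper. -/
def Lam (x1 x2 y1 y2 z1 z2 : ℂ) : ℂ :=
  y2*z1*(z1 - 1) - x2*z1*(y1*(z2 - 1) + y2*(z1 - z2))
    + x1*y2*(z1 - z2)*(1 - z1 + x2*(z1 - z2))
    + x1*y1*(x2*z2*(y1 - y2)*(z2 - 1) + (z2 - z1)*(1 - x2*z2)
        + z1*y2*(x2 - 1)*(z2 - 1))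

/-- The KP type 4-simplex map. -/
def Skp : Q C3 → Q C3 := fun q =>
  match q with
  | ((x1,x2,x3),(y1,y2,y3),(z1,z2,z3),(t1,t2,t3)) =>
    ((x1*y1/(z1 + x1*(y1 - z1 + z2 - y1*z2)),
      (y2*(1 - z1) + x2*y1*(z2 - 1) + x2*y2*(z1 - z2))
        / ((1 - x2)*(z2 - z1) + (1 - z2)*(y2 - x2*y1)),
      (t1 - t2)*x3*y3/((t1 - 1)*x3 - (t2 - 1)*y3)),
     (z1 + x1*(y1 - z1 + z2 - y1*z2),
      (z1 + x1*(y1 - z1 + z2 - y1*z2))*((1 - x2)*y2*z1 - (y1 - y2)*x2*z2)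
        / (x1*(y1 - y2)*(z1 - z2) - z1*(x2*y1 - y2)),
      (t1 - t2)*x3*y3/(t1*x3 - t2*y3)),
     ((x1 - x2)*y1*z1*(y1*x2*(z2 - 1) + (z1 - z2)*(x2 - 1) - y2*(z2 - 1))
        / Lam x1 x2 y1 y2 z1 z2,
      (x1*z2*(y1 - y2) + y2*z1*(x1 - 1))
        * (y1*x2*(z2 - 1) + (z1 - z2)*(x2 - 1) - y2*(z2 - 1))
        / Lam x1 x2 y1 y2 z1 z2,
      t3),
     (t1*((t1 - 1)*x3 - (t2 - 1)*y3)/((t1 - t2)*y3),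
      t2*((t1 - 1)*x3 - (t2 - 1)*y3)/((t1 - t2)*x3),
      z3))

/-- Nonvanishing of the denominators of `Skp`. -/
def DomKP : Q C3 → Prop := fun q =>
  match q with
  | ((x1,x2,x3),(y1,y2,y3),(z1,z2,_),(t1,t2,_)) =>
    z1 + x1*(y1 - z1 + z2 - y1*z2) ≠ 0 ∧
    (1 - x2)*(z2 - z1) + (1 - z2)*(y2 - x2*y1) ≠ 0 ∧
    (t1 - 1)*x3 - (t2 - 1)*y3 ≠ 0 ∧
    x1*(y1 - y2)*(z1 - z2) - z1*(x2*y1 - y2) ≠ 0 ∧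
    t1*x3 - t2*y3 ≠ 0 ∧
    Lam x1 x2 y1 y2 z1 z2 ≠ 0 ∧
    (t1 - t2)*y3 ≠ 0 ∧
    (t1 - t2)*x3 ≠ 0

/-! For `I₁, …, I₄` the image side is a product of two fractions whose denominators cancel
crosswise (`I₅`, `I₆` are symmetric under `z₃ ↔ t₃`). The only nontrivial cancellation is
for `I₂`: writing `D` for the denominator of `v₂`, one has `v₂ - 1 = Λ / D` and
`w₂ - 1 = (y₂ - 1)(z₂ - 1) D / Λ`. Likewise
`1 - r₂ = (1 - t₂)(t₁x₃ - t₂y₃) / ((t₁ - t₂)x₃)` cancels the denominator of `v₃`. -/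

theorem Skp_v2_sub_one {x1 x2 y1 y2 z1 z2 : ℂ}
    (hD : x1*(y1 - y2)*(z1 - z2) - z1*(x2*y1 - y2) ≠ 0) :
    (z1 + x1*(y1 - z1 + z2 - y1*z2))*((1 - x2)*y2*z1 - (y1 - y2)*x2*z2)
        / (x1*(y1 - y2)*(z1 - z2) - z1*(x2*y1 - y2)) - 1
      = Lam x1 x2 y1 y2 z1 z2 / (x1*(y1 - y2)*(z1 - z2) - z1*(x2*y1 - y2)) := by
  rw [div_sub_one hD, Lam]
  ring

theorem Skp_w2_sub_one {x1 x2 y1 y2 z1 z2 : ℂ} (hΛ : Lam x1 x2 y1 y2 z1 z2 ≠ 0) :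
    (x1*z2*(y1 - y2) + y2*z1*(x1 - 1))
        * (y1*x2*(z2 - 1) + (z1 - z2)*(x2 - 1) - y2*(z2 - 1))
        / Lam x1 x2 y1 y2 z1 z2 - 1
      = (y2 - 1)*(z2 - 1)*(x1*(y1 - y2)*(z1 - z2) - z1*(x2*y1 - y2))
        / Lam x1 x2 y1 y2 z1 z2 := by
  rw [div_sub_one hΛ, Lam]
  ring

theorem one_sub_Skp_r2 {K : Type*} [Field K] {x3 y3 t1 t2 : K} (hx3 : (t1 - t2)*x3 ≠ 0) :
    1 - t2*((t1 - 1)*x3 - (t2 - 1)*y3)/((t1 - t2)*x3)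
      = (1 - t2)*(t1*x3 - t2*y3)/((t1 - t2)*x3) := by
  rw [one_sub_div hx3]
  ring

/-- For the KP type 4-simplex map S, writing
S(x₁,x₂,x₃,y₁,y₂,y₃,z₁,z₂,z₃,t₁,t₂,t₃) = (u₁,u₂,u₃,v₁,v₂,v₃,w₁,w₂,w₃,r₁,r₂,r₃),
at every point where all denominators are nonzero one has u₁v₁ = x₁y₁,
(v₂−1)(w₂−1) = (y₂−1)(z₂−1), u₃r₁ = x₃t₁, v₃(1−r₂) = y₃(1−t₂), w₃r₃ = z₃t₃ and
w₃+r₃ = z₃+t₃; that is, I₁ = x₁y₁, I₂ = (y₂−1)(z₂−1), I₃ = x₃t₁, I₄ = y₃(1−t₂),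
I₅ = z₃t₃ and I₆ = z₃+t₃ are invariants of S. -/
theorem Skp_invariants :
    ∀ x1 x2 x3 y1 y2 y3 z1 z2 z3 t1 t2 t3 : ℂ,
      DomKP ((x1,x2,x3),(y1,y2,y3),(z1,z2,z3),(t1,t2,t3)) →
      match Skp ((x1,x2,x3),(y1,y2,y3),(z1,z2,z3),(t1,t2,t3)) with
      | ((u1,_,u3),(v1,v2,v3),(_,w2,w3),(r1,r2,r3)) =>
        u1*v1 = x1*y1 ∧
        (v2 - 1)*(w2 - 1) = (y2 - 1)*(z2 - 1) ∧
        u3*r1 = x3*t1 ∧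
        v3*(1 - r2) = y3*(1 - t2) ∧
        w3*r3 = z3*t3 ∧
        w3 + r3 = z3 + t3 := by
  intro x1 x2 x3 y1 y2 y3 z1 z2 z3 t1 t2 t3 hdom
  obtain ⟨hv1, -, hA, hD, hC, hΛ, hy3, hx3⟩ := hdom
  dsimp only [Skp]
  refine ⟨div_mul_cancel₀ _ hv1, ?_, ?_, ?_, mul_comm _ _, add_comm _ _⟩
  · rw [Skp_v2_sub_one hD, Skp_w2_sub_one hΛ, div_mul_div_comm, div_eq_iff (mul_ne_zero hD hΛ)]
    ring
  · rw [div_mul_div_comm, div_eq_iff (mul_ne_zero hA hy3)]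
    ring
  · rw [one_sub_Skp_r2 hx3, div_mul_div_comm, div_eq_iff (mul_ne_zero hC hx3)]
    ring

end Paper4Simplex
end
end
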